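/- With β(n) = ln ζ(z_0(n)) − n ln z_0(n) and ζ having a_0 > 0, we have lim_{n→0⁺} β(n) = ln a_0. If additionally ζ is a polynomial of degree n_max with leading coefficient a_{n_max} > 0, then lim_{n→n_max⁻} β(n) = ln a_{n_max}. -/

import Mathlib

open Filter Topology Set

/-- The generating function ζ(z) = Σ_{k≥0} aₖ zᵏ. -/
noncomputable def tsumZeta (a : ℕ → ℕ) (z : ℝ) : ℝ := ∑' k : ℕ, (a k : ℝ) * z ^ k

/-!
Write `S(z) = z ζ'(z) = ∑ k aₖ zᵏ`, so that the saddle point satisfies `S(z₀) = n ζ(z₀)`.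

Near `n = 0`: termwise `ζ ≤ a₀ + S`, hence `a₀ ≤ ζ(z₀) ≤ a₀ / (1 - n)`; and for `k₀ ≥ 1` with
`a_{k₀} > 0`, `k₀ a_{k₀} z₀^{k₀} ≤ S(z₀) ≤ 2 a₀ n`, so `z₀ → 0`. Once `z₀ ≤ ρ`, the bound
`S(z₀) ≤ (z₀ / ρ) S(ρ)` gives `z₀ ≥ c n`. Hence `n log z₀` lies between `n log (c n)` and
`n log (C n) / k₀`, both of which tend to `0`.

Near `n = m = deg ζ`: `(m - n) ζ(z₀) = ∑ (m - k) aₖ z₀ᵏ`, which is at least `m a₀`, and at most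
`C z₀^{m-1}` once `z₀ ≥ 1`. The first bound forces `z₀ → ∞`, the second gives
`(m - n) z₀ ≤ C / a_m`, so `(m - n) log z₀ → 0`. Finally
`β(n) = log (ζ(z₀) / z₀^m) + (m - n) log z₀ + log a_m` and `ζ(z) / z^m → a_m`.
-/

theorem mul_natCast_mul_mul_pow_sub_one (x y : ℝ) (k : ℕ) :
    x * ((k : ℝ) * y * x ^ (k - 1)) = k * y * x ^ k := by
  rcases k with _ | k
  · simp
  · rw [Nat.add_sub_cancel, pow_succ]; ring

section NonnegCoeff

variable {c : ℕ → ℝ} {x s : ℝ}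

theorem summable_mul_pow_of_le (hc : ∀ k, 0 ≤ c k) (hx : 0 ≤ x) (hxs : x ≤ s)
    (hs : Summable fun k => c k * s ^ k) : Summable fun k => c k * x ^ k :=
  hs.of_nonneg_of_le (fun k => mul_nonneg (hc k) (pow_nonneg hx k)) fun k => by
    have := hc k; gcongr

theorem summable_natCast_mul_mul_pow_of_lt (hc : ∀ k, 0 ≤ c k) (hx : 0 ≤ x) (hxs : x < s)
    (hs : Summable fun k => c k * s ^ k) : Summable fun k : ℕ => (k : ℝ) * c k * x ^ k := by
  have hs0 : 0 < s := hx.trans_lt hxs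
  have hq : ‖x / s‖ < 1 := by
    rw [Real.norm_of_nonneg (div_nonneg hx hs0.le)]
    exact (div_lt_one hs0).2 hxs
  refine .of_nonneg_of_le (fun k => by have := hc k; positivity) (fun k => ?_)
    ((summable_pow_mul_geometric_of_norm_lt_one 1 hq).mul_right (∑' j, c j * s ^ j))
  have hterm : c k * s ^ k ≤ ∑' j, c j * s ^ j :=
    hs.le_tsum k fun j _ => mul_nonneg (hc j) (pow_nonneg hs0.le j)
  calc (k : ℝ) * c k * x ^ k = k ^ 1 * (x / s) ^ k * (c k * s ^ k) := by
        rw [div_pow]; field_simp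
    _ ≤ k ^ 1 * (x / s) ^ k * ∑' j, c j * s ^ j := by gcongr

theorem summable_natCast_mul_mul_pow_sub_one_of_lt (hc : ∀ k, 0 ≤ c k) (hx : 0 < x)
    (hxs : x < s) (hs : Summable fun k => c k * s ^ k) :
    Summable fun k : ℕ => (k : ℝ) * c k * x ^ (k - 1) :=
  ((summable_natCast_mul_mul_pow_of_lt hc hx.le hxs hs).div_const x).congr fun k => by
    rw [← mul_natCast_mul_mul_pow_sub_one x, mul_div_cancel_left₀ _ hx.ne']

theorem hasDerivAt_tsum_mul_pow (hc : ∀ k, 0 ≤ c k) (hx : 0 < x) (hxs : x < s)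
    (hs : Summable fun k => c k * s ^ k) :
    HasDerivAt (fun y => ∑' k, c k * y ^ k) (∑' k : ℕ, (k : ℝ) * c k * x ^ (k - 1)) x := by
  obtain ⟨r, hxr, hrs⟩ := exists_between hxs
  have hr0 : 0 < r := hx.trans hxr
  have hbound :
      ∀ k, ∀ y ∈ Ioo 0 r, ‖c k * (k * y ^ (k - 1))‖ ≤ k * c k * r ^ (k - 1) := by
    intro k y ⟨hy0, hyr⟩
    have := hc k
    rw [Real.norm_of_nonneg (by positivity), ← mul_assoc, mul_comm (c k)]
    gcongr
  exact (hasDerivAt_tsum_of_isPreconnected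
    (summable_natCast_mul_mul_pow_sub_one_of_lt hc hr0 hrs hs) isOpen_Ioo isPreconnected_Ioo
    (fun k y _ => (hasDerivAt_pow k y).const_mul (c k)) hbound ⟨hx, hxr⟩
    (summable_mul_pow_of_le hc hx.le hxs.le hs) ⟨hx, hxr⟩).congr_deriv
    (tsum_congr fun k => by ring)

theorem tsum_mul_pow_le_add_tsum_natCast_mul (hc : ∀ k, 0 ≤ c k) (hx : 0 ≤ x)
    (h : Summable fun k => c k * x ^ k) (h' : Summable fun k : ℕ => (k : ℝ) * c k * x ^ k) :
    ∑' k, c k * x ^ k ≤ c 0 + ∑' k : ℕ, (k : ℝ) * c k * x ^ k := by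
  rw [h.tsum_eq_zero_add, h'.tsum_eq_zero_add]
  simp only [pow_zero, mul_one, CharP.cast_eq_zero, zero_mul, zero_add]
  refine add_le_add le_rfl (((summable_nat_add_iff 1).2 h).tsum_le_tsum (fun k => ?_)
    ((summable_nat_add_iff 1).2 h'))
  have := hc (k + 1)
  rw [mul_assoc]
  exact le_mul_of_one_le_left (by positivity) (Nat.one_le_cast.2 k.succ_pos)

theorem tsum_natCast_mul_mul_pow_le {ρ : ℝ} (hc : ∀ k, 0 ≤ c k) (hx : 0 ≤ x) (hxρ : x ≤ ρ)
    (h : Summable fun k : ℕ => (k : ℝ) * c k * x ^ k)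
    (hρ : Summable fun k : ℕ => (k : ℝ) * c k * ρ ^ k) :
    ∑' k : ℕ, (k : ℝ) * c k * x ^ k ≤ x / ρ * ∑' k : ℕ, (k : ℝ) * c k * ρ ^ k := by
  rw [← tsum_mul_left]
  refine h.tsum_le_tsum (fun k => ?_) (hρ.mul_left _)
  rcases k with _ | k
  · simp
  rcases hx.eq_or_lt with rfl | hx0
  · simp
  have := hc (k + 1)
  calc ((k + 1 : ℕ) : ℝ) * c (k + 1) * x ^ (k + 1)
        = (k + 1 : ℕ) * c (k + 1) * (x * x ^ k) := by ring
    _ ≤ (k + 1 : ℕ) * c (k + 1) * (x * ρ ^ k) := by gcongr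
    _ = x / ρ * ((k + 1 : ℕ) * c (k + 1) * ρ ^ (k + 1)) := by
        field_simp [(hx0.trans_le hxρ).ne']; ring

theorem exists_lt_summable_of_ofReal_lt {R : ENNReal}
    (hconv : ∀ x : ℝ, 0 ≤ x → ENNReal.ofReal x < R → Summable fun k => c k * x ^ k)
    (hx : 0 ≤ x) (hxR : ENNReal.ofReal x < R) :
    ∃ s, x < s ∧ Summable fun k => c k * s ^ k := by
  obtain ⟨s, hs0, hxs, hsR⟩ := ENNReal.lt_iff_exists_real_btwn.1 hxR
  exact ⟨s, (ENNReal.ofReal_lt_ofReal_iff_of_nonneg hx).1 hxs, hconv s hs0 hsR⟩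

end NonnegCoeff

/-- `z > 0` solves the saddle-point equation `z ζ'(z) = n ζ(z)` of `ζ(z) = ∑ cₖ zᵏ`, with
`z ζ'(z)` written as the series `∑ k cₖ zᵏ` and both series converging at `z`. -/
structure IsSaddlePoint (c : ℕ → ℝ) (n z : ℝ) : Prop where
  pos : 0 < z
  summable : Summable fun k => c k * z ^ k
  summable_natCast_mul : Summable fun k : ℕ => (k : ℝ) * c k * z ^ k
  eq : ∑' k : ℕ, (k : ℝ) * c k * z ^ k = n * ∑' k, c k * z ^ k

theorem isSaddlePoint_of_mul_deriv_eq {c : ℕ → ℝ} {n z s : ℝ} (hc : ∀ k, 0 ≤ c k)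
    (hz : 0 < z) (hzs : z < s) (hs : Summable fun k => c k * s ^ k)
    (h : z * deriv (fun y => ∑' k, c k * y ^ k) z = n * ∑' k, c k * z ^ k) :
    IsSaddlePoint c n z where
  pos := hz
  summable := summable_mul_pow_of_le hc hz.le hzs.le hs
  summable_natCast_mul := summable_natCast_mul_mul_pow_of_lt hc hz.le hzs hs
  eq := by
    rw [(hasDerivAt_tsum_mul_pow hc hz hzs hs).deriv, ← tsum_mul_left] at h
    simpa only [mul_natCast_mul_mul_pow_sub_one] using h

namespace IsSaddlePoint

variable {c : ℕ → ℝ} {n z : ℝ}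

theorem le_tsum (h : IsSaddlePoint c n z) (hc : ∀ k, 0 ≤ c k) :
    c 0 ≤ ∑' k, c k * z ^ k := by
  simpa using h.summable.le_tsum 0 fun k _ => mul_nonneg (hc k) (pow_nonneg h.pos.le k)

theorem tsum_le (h : IsSaddlePoint c n z) (hc : ∀ k, 0 ≤ c k) (hn : n < 1) :
    ∑' k, c k * z ^ k ≤ c 0 / (1 - n) := by
  rw [le_div_iff₀ (sub_pos.2 hn)]
  have := tsum_mul_pow_le_add_tsum_natCast_mul hc h.pos.le h.summable h.summable_natCast_mul
  linarith [h.eq]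

theorem natCast_mul_mul_pow_le (h : IsSaddlePoint c n z) (hc : ∀ k, 0 ≤ c k) (hn0 : 0 ≤ n)
    (hn : n ≤ 1 / 2) (k₀ : ℕ) : k₀ * c k₀ * z ^ k₀ ≤ 2 * c 0 * n := by
  have hbound : c 0 / (1 - n) ≤ 2 * c 0 := by
    rw [div_le_iff₀ (by linarith)]
    nlinarith [hc 0]
  calc k₀ * c k₀ * z ^ k₀ ≤ n * ∑' k, c k * z ^ k := h.eq ▸
        h.summable_natCast_mul.le_tsum k₀ fun k _ => by have := hc k; have := h.pos; positivity
    _ ≤ n * (2 * c 0) :=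
        mul_le_mul_of_nonneg_left ((h.tsum_le hc (by linarith)).trans hbound) hn0
    _ = 2 * c 0 * n := by ring

theorem mul_le_div_mul_tsum {ρ : ℝ} (h : IsSaddlePoint c n z) (hc : ∀ k, 0 ≤ c k)
    (hn : 0 ≤ n) (hzρ : z ≤ ρ) (hρ : Summable fun k : ℕ => (k : ℝ) * c k * ρ ^ k) :
    n * c 0 ≤ z / ρ * ∑' k : ℕ, (k : ℝ) * c k * ρ ^ k :=
  calc n * c 0 ≤ n * ∑' k, c k * z ^ k := mul_le_mul_of_nonneg_left (h.le_tsum hc) hn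
    _ = ∑' k : ℕ, (k : ℝ) * c k * z ^ k := h.eq.symm
    _ ≤ _ := tsum_natCast_mul_mul_pow_le hc h.pos.le hzρ h.summable_natCast_mul hρ

end IsSaddlePoint

theorem tendsto_mul_log_const_mul_nhdsGT_zero (C : ℝ) :
    Tendsto (fun n => n * Real.log (C * n)) (𝓝[>] 0) (𝓝 0) := by
  rcases eq_or_ne C 0 with rfl | hC
  · simp
  have hcont : Continuous fun n => C * n * Real.log (C * n) / C :=
    (Real.continuous_mul_log.comp (continuous_const_mul C)).div_const C
  refine ((hcont.tendsto 0).mono_left nhdsWithin_le_nhds).congr (fun n => ?_) |>.trans (by simp)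
  field_simp

section SaddleNearZero

variable {c : ℕ → ℝ} {z0 : ℝ → ℝ}

theorem tendsto_tsum_mul_pow_nhdsGT_zero_of_isSaddlePoint (hc : ∀ k, 0 ≤ c k)
    (hz : ∀ᶠ n in 𝓝[>] 0, IsSaddlePoint c n (z0 n)) :
    Tendsto (fun n => ∑' k, c k * z0 n ^ k) (𝓝[>] 0) (𝓝 (c 0)) := by
  have hbound : Tendsto (fun n : ℝ => c 0 / (1 - n)) (𝓝[>] 0) (𝓝 (c 0)) := by
    have : ContinuousAt (fun n : ℝ => c 0 / (1 - n)) 0 := by fun_prop (disch := norm_num)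
    simpa using this.tendsto.mono_left nhdsWithin_le_nhds
  refine tendsto_of_tendsto_of_tendsto_of_le_of_le' tendsto_const_nhds hbound ?_ ?_
  · filter_upwards [hz] with n hn using hn.le_tsum hc
  · filter_upwards [hz, Ioo_mem_nhdsGT one_pos] with n hn hn1 using hn.tsum_le hc hn1.2

theorem tendsto_mul_log_nhdsGT_zero_of_isSaddlePoint (hc : ∀ k, 0 ≤ c k)
    (hc0 : 0 < c 0) {k₀ : ℕ} (hk₀ : 0 < k₀) (hck₀ : 0 < c k₀) {ρ : ℝ} (hρ : 0 < ρ)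
    (hρs : Summable fun k : ℕ => (k : ℝ) * c k * ρ ^ k)
    (hz : ∀ᶠ n in 𝓝[>] 0, IsSaddlePoint c n (z0 n)) :
    Tendsto (fun n => n * Real.log (z0 n)) (𝓝[>] 0) (𝓝 0) := by
  set M := ∑' k : ℕ, (k : ℝ) * c k * ρ ^ k
  have hM : 0 < M := (by positivity : (0 : ℝ) < k₀ * c k₀ * ρ ^ k₀).trans_le <|
    hρs.le_tsum k₀ fun k _ => by have := hc k; positivity
  set A := 2 * c 0 / (k₀ * c k₀)
  have hA : ∀ᶠ n in 𝓝[>] 0, A * n < ρ ^ k₀ :=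
    ((continuous_const_mul A).tendsto' 0 0 (mul_zero A)).mono_left nhdsWithin_le_nhds
      |>.eventually_lt_const (pow_pos hρ k₀)
  have hupper : ∀ᶠ n in 𝓝[>] 0, z0 n ^ k₀ ≤ A * n := by
    filter_upwards [hz, Ioo_mem_nhdsGT (by norm_num : (0 : ℝ) < 1 / 2)] with n hn hn'
    rw [div_mul_eq_mul_div, le_div_iff₀ (by positivity)]
    linarith [hn.natCast_mul_mul_pow_le hc hn'.1.le hn'.2.le k₀]
  have hlower : ∀ᶠ n in 𝓝[>] 0, c 0 * ρ / M * n ≤ z0 n := by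
    filter_upwards [hz, hupper, hA, self_mem_nhdsWithin] with n hn hup hAn hn0
    have hzρ : z0 n ≤ ρ :=
      (pow_le_pow_iff_left₀ hn.pos.le hρ.le hk₀.ne').1 (hup.trans hAn.le)
    have := hn.mul_le_div_mul_tsum hc hn0.le hzρ hρs
    rw [div_mul_eq_mul_div, div_le_iff₀ hM]
    rw [div_mul_eq_mul_div, le_div_iff₀ hρ] at this
    linarith
  refine tendsto_of_tendsto_of_tendsto_of_le_of_le'
    (tendsto_mul_log_const_mul_nhdsGT_zero (c 0 * ρ / M))
    (by simpa using (tendsto_mul_log_const_mul_nhdsGT_zero A).div_const (k₀ : ℝ)) ?_ ?_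
  · filter_upwards [hz, hlower, self_mem_nhdsWithin] with n hn hlow hn0
    exact mul_le_mul_of_nonneg_left (Real.log_le_log (mul_pos (by positivity) hn0) hlow) hn0.le
  · filter_upwards [hz, hupper, self_mem_nhdsWithin] with n hn hup hn0
    have hlog : k₀ * Real.log (z0 n) ≤ Real.log (A * n) := by
      rw [← Real.log_pow]
      exact Real.log_le_log (pow_pos hn.pos k₀) hup
    rw [le_div_iff₀ (by positivity)]
    nlinarith [mul_le_mul_of_nonneg_left hlog hn0.le]

theorem tendsto_log_tsum_sub_mul_log_nhdsGT_zero_of_isSaddlePoint (hc : ∀ k, 0 ≤ c k)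
    (hc0 : 0 < c 0) {k₀ : ℕ} (hk₀ : 0 < k₀) (hck₀ : 0 < c k₀) {ρ : ℝ} (hρ : 0 < ρ)
    (hρs : Summable fun k : ℕ => (k : ℝ) * c k * ρ ^ k)
    (hz : ∀ᶠ n in 𝓝[>] 0, IsSaddlePoint c n (z0 n)) :
    Tendsto (fun n => Real.log (∑' k, c k * z0 n ^ k) - n * Real.log (z0 n)) (𝓝[>] 0)
      (𝓝 (Real.log (c 0))) := by
  simpa using ((Real.continuousAt_log hc0.ne').tendsto.comp
    (tendsto_tsum_mul_pow_nhdsGT_zero_of_isSaddlePoint hc hz)).sub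
      (tendsto_mul_log_nhdsGT_zero_of_isSaddlePoint hc hc0 hk₀ hck₀ hρ hρs hz)

end SaddleNearZero

section Polynomial

variable {c : ℕ → ℝ} {m : ℕ}

theorem tsum_mul_pow_eq_sum_range (hcm : ∀ k, m < k → c k = 0) (x : ℝ) :
    ∑' k, c k * x ^ k = ∑ k ∈ Finset.range (m + 1), c k * x ^ k :=
  tsum_eq_sum fun k hk => by
    rw [hcm k (by simpa [Nat.lt_succ_iff] using hk), zero_mul]

theorem le_sum_range_mul_pow (hc : ∀ k, 0 ≤ c k) {x : ℝ} (hx : 0 ≤ x) {j : ℕ} (hj : j ≤ m) :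
    c j * x ^ j ≤ ∑ k ∈ Finset.range (m + 1), c k * x ^ k :=
  Finset.single_le_sum (fun k _ => mul_nonneg (hc k) (pow_nonneg hx k))
    (Finset.mem_range.2 (Nat.lt_succ_of_le hj))

theorem mul_le_sum_range_sub_mul (hc : ∀ k, 0 ≤ c k) {x : ℝ} (hx : 0 ≤ x) :
    (m : ℝ) * c 0 ≤ ∑ k ∈ Finset.range (m + 1), ((m : ℝ) - k) * c k * x ^ k := by
  have := Finset.single_le_sum (f := fun k => ((m : ℝ) - k) * c k * x ^ k)
    (fun k hk => mul_nonneg (mul_nonneg (sub_nonneg.2 (by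
      exact_mod_cast Nat.lt_succ_iff.1 (Finset.mem_range.1 hk))) (hc k)) (pow_nonneg hx k))
    (Finset.mem_range.2 m.succ_pos)
  simpa using this

theorem sum_range_sub_mul_le (hc : ∀ k, 0 ≤ c k) {x : ℝ} (hx : 1 ≤ x) :
    ∑ k ∈ Finset.range (m + 1), ((m : ℝ) - k) * c k * x ^ k ≤
      (∑ k ∈ Finset.range (m + 1), ((m : ℝ) - k) * c k) * x ^ (m - 1) := by
  rw [Finset.sum_mul]
  refine Finset.sum_le_sum fun k hk => ?_
  rcases (Nat.lt_succ_iff.1 (Finset.mem_range.1 hk)).eq_or_lt with rfl | hkm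
  · simp
  have : (0 : ℝ) ≤ ((m : ℝ) - k) * c k :=
    mul_nonneg (sub_nonneg.2 (by exact_mod_cast hkm.le)) (hc k)
  gcongr
  · omega

theorem tendsto_sum_range_mul_pow_div_atTop (hcm : c m ≠ 0) :
    Tendsto (fun x => (∑ k ∈ Finset.range (m + 1), c k * x ^ k) / (c m * x ^ m)) atTop
      (𝓝 1) := by
  have hlower : Tendsto (fun x : ℝ => ∑ k ∈ Finset.range m, c k / c m * (x ^ k / x ^ m))
      atTop (𝓝 0) := by
    simpa using tendsto_finsetSum (Finset.range m) fun k hk =>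
      (tendsto_pow_div_pow_atTop_zero (Finset.mem_range.1 hk)).const_mul (c k / c m)
  refine (hlower.add_const 1).congr' ?_ |>.trans (by simp)
  filter_upwards [eventually_gt_atTop 0] with x hx
  rw [Finset.sum_range_succ, add_div, Finset.sum_div,
    div_self (mul_ne_zero hcm (pow_pos hx m).ne')]
  congr 1
  exact Finset.sum_congr rfl fun k _ => by field_simp

theorem IsSaddlePoint.sub_mul_sum_range_eq {n z : ℝ} (h : IsSaddlePoint c n z)
    (hcm : ∀ k, m < k → c k = 0) :
    (m - n) * ∑ k ∈ Finset.range (m + 1), c k * z ^ k =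
      ∑ k ∈ Finset.range (m + 1), ((m : ℝ) - k) * c k * z ^ k := by
  have heq := h.eq
  rw [tsum_mul_pow_eq_sum_range hcm,
    tsum_eq_sum (s := Finset.range (m + 1)) fun k hk => by
      rw [hcm k (by simpa [Nat.lt_succ_iff] using hk), mul_zero, zero_mul]] at heq
  rw [sub_mul, ← heq, Finset.mul_sum, ← Finset.sum_sub_distrib]
  exact Finset.sum_congr rfl fun k _ => by ring

theorem IsSaddlePoint.sub_mul_mul_le {n z : ℝ} (h : IsSaddlePoint c n z) (hc : ∀ k, 0 ≤ c k)
    (hm : 0 < m) (hcm : ∀ k, m < k → c k = 0) (hz : 1 ≤ z) (hn : n ≤ m) :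
    (m - n) * z * c m ≤ ∑ k ∈ Finset.range (m + 1), ((m : ℝ) - k) * c k := by
  have hpow : 0 < z ^ (m - 1) := pow_pos (zero_lt_one.trans_le hz) _
  refine le_of_mul_le_mul_right ?_ hpow
  calc (m - n) * z * c m * z ^ (m - 1) = (m - n) * (c m * z ^ m) := by
        rw [← pow_sub_one_mul hm.ne']; ring
    _ ≤ (m - n) * ∑ k ∈ Finset.range (m + 1), c k * z ^ k :=
        mul_le_mul_of_nonneg_left (le_sum_range_mul_pow hc h.pos.le le_rfl) (sub_nonneg.2 hn)
    _ = _ := h.sub_mul_sum_range_eq hcm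
    _ ≤ _ := sum_range_sub_mul_le hc hz

end Polynomial

section SaddleNearDegree

variable {c : ℕ → ℝ} {m : ℕ} {z0 : ℝ → ℝ}

theorem tendsto_atTop_nhdsLT_of_isSaddlePoint (hc : ∀ k, 0 ≤ c k) (hc0 : 0 < c 0) (hm : 0 < m)
    (hcm : ∀ k, m < k → c k = 0) (hz : ∀ᶠ n in 𝓝[<] (m : ℝ), IsSaddlePoint c n (z0 n)) :
    Tendsto z0 (𝓝[<] (m : ℝ)) atTop := by
  refine tendsto_atTop.2 fun B => ?_
  set P := fun x => ∑ k ∈ Finset.range (m + 1), c k * x ^ k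
  set B' := max B 0
  have hPB' : 0 < P B' :=
    hc0.trans_le (by simpa using le_sum_range_mul_pow hc (le_max_right B 0) m.zero_le)
  have hδ : 0 < m * c 0 / P B' := by positivity
  filter_upwards [hz, Ioo_mem_nhdsLT (sub_lt_self (m : ℝ) hδ)] with n hn hnm
  by_contra! hzB
  have hQ : (m : ℝ) * c 0 ≤ (m - n) * P (z0 n) :=
    hn.sub_mul_sum_range_eq hcm ▸ mul_le_sum_range_sub_mul hc hn.pos.le
  have hP : P (z0 n) ≤ P B' := Finset.sum_le_sum fun k _ => by
    have := hc k; gcongr; exacts [hn.pos.le, hzB.le.trans (le_max_left B 0)]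
  have := hnm.1
  rw [sub_lt_comm, lt_div_iff₀ hPB'] at this
  nlinarith [mul_le_mul_of_nonneg_left hP (sub_nonneg.2 hnm.2.le)]

theorem tendsto_sub_mul_log_nhdsLT_of_isSaddlePoint (hc : ∀ k, 0 ≤ c k) (hc0 : 0 < c 0)
    (hm : 0 < m) (hcm₀ : 0 < c m) (hcm : ∀ k, m < k → c k = 0)
    (hz : ∀ᶠ n in 𝓝[<] (m : ℝ), IsSaddlePoint c n (z0 n)) :
    Tendsto (fun n => (m - n) * Real.log (z0 n)) (𝓝[<] (m : ℝ)) (𝓝 0) := by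
  set C := ∑ k ∈ Finset.range (m + 1), ((m : ℝ) - k) * c k
  have htop := tendsto_atTop_nhdsLT_of_isSaddlePoint hc hc0 hm hcm hz
  have hlog :
      Tendsto (fun n => C / c m * (Real.log (z0 n) / z0 n)) (𝓝[<] (m : ℝ)) (𝓝 0) := by
    simpa using ((Real.tendsto_pow_log_div_mul_add_atTop 1 0 1 one_ne_zero).comp
      htop).const_mul (C / c m)
  refine tendsto_of_tendsto_of_tendsto_of_le_of_le' tendsto_const_nhds hlog ?_ ?_
  · filter_upwards [htop.eventually_ge_atTop 1, self_mem_nhdsWithin] with n hz1 hn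
    exact mul_nonneg (sub_nonneg.2 hn.le) (Real.log_nonneg hz1)
  · filter_upwards [hz, htop.eventually_ge_atTop 1, self_mem_nhdsWithin] with n hn hz1 hnm
    have hbound : (m - n) * z0 n ≤ C / c m :=
      (le_div_iff₀ hcm₀).2 (hn.sub_mul_mul_le hc hm hcm hz1 hnm.le)
    calc (m - n) * Real.log (z0 n) = (m - n) * z0 n * (Real.log (z0 n) / z0 n) := by
          field_simp [hn.pos.ne']
      _ ≤ C / c m * (Real.log (z0 n) / z0 n) :=
          mul_le_mul_of_nonneg_right hbound (div_nonneg (Real.log_nonneg hz1) hn.pos.le)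

theorem tendsto_log_tsum_sub_mul_log_nhdsLT_of_isSaddlePoint (hc : ∀ k, 0 ≤ c k)
    (hc0 : 0 < c 0) (hm : 0 < m) (hcm₀ : 0 < c m) (hcm : ∀ k, m < k → c k = 0)
    (hz : ∀ᶠ n in 𝓝[<] (m : ℝ), IsSaddlePoint c n (z0 n)) :
    Tendsto (fun n => Real.log (∑' k, c k * z0 n ^ k) - n * Real.log (z0 n)) (𝓝[<] (m : ℝ))
      (𝓝 (Real.log (c m))) := by
  have htop := tendsto_atTop_nhdsLT_of_isSaddlePoint hc hc0 hm hcm hz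
  have hratio : Tendsto
      (fun n => Real.log ((∑ k ∈ Finset.range (m + 1), c k * z0 n ^ k) / (c m * z0 n ^ m)))
      (𝓝[<] (m : ℝ)) (𝓝 0) := by
    simpa [Function.comp_def] using (Real.continuousAt_log one_ne_zero).tendsto.comp
      ((tendsto_sum_range_mul_pow_div_atTop hcm₀.ne').comp htop)
  have hlog := tendsto_sub_mul_log_nhdsLT_of_isSaddlePoint hc hc0 hm hcm₀ hcm hz
  refine (((hratio.add hlog).add_const (Real.log (c m))).congr' ?_).trans (by simp)
  filter_upwards [htop.eventually_gt_atTop 0] with n hz0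
  have hP : 0 < ∑ k ∈ Finset.range (m + 1), c k * z0 n ^ k :=
    hc0.trans_le (by simpa using le_sum_range_mul_pow hc hz0.le m.zero_le)
  rw [tsum_mul_pow_eq_sum_range hcm, Real.log_div hP.ne' (by positivity),
    Real.log_mul hcm₀.ne' (by positivity), Real.log_pow]
  ring

end SaddleNearDegree

theorem typical_ee_beta_boundary_general (a : ℕ → ℕ) (ha0 : 0 < a 0)
    (hk : ∃ k, 0 < k ∧ 0 < a k)
    (R : ENNReal) (hR : 0 < R)
    (hconv : ∀ x : ℝ, 0 ≤ x → ENNReal.ofReal x < R →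
      Summable (fun k : ℕ => (a k : ℝ) * x ^ k))
    (nmax : ENNReal) (hnmax : 0 < nmax)
    (z0 : ℝ → ℝ)
    (hz0 : ∀ n : ℝ, 0 < n → ENNReal.ofReal n < nmax →
      0 < z0 n ∧ ENNReal.ofReal (z0 n) < R ∧
        z0 n * deriv (tsumZeta a) (z0 n) = n * tsumZeta a (z0 n) ∧
        (∀ w : ℝ, 0 < w → ENNReal.ofReal w < R →
          w * deriv (tsumZeta a) w = n * tsumZeta a w → w = z0 n)) :
    Tendsto (fun n : ℝ => Real.log (tsumZeta a (z0 n)) - n * Real.log (z0 n))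
      (𝓝[>] (0 : ℝ)) (𝓝 (Real.log (a 0))) ∧
    (∀ m : ℕ, 1 ≤ m → 0 < a m → (∀ k : ℕ, m < k → a k = 0) → nmax = (m : ENNReal) →
      Tendsto (fun n : ℝ => Real.log (tsumZeta a (z0 n)) - n * Real.log (z0 n))
        (𝓝[<] (m : ℝ)) (𝓝 (Real.log (a m)))) := by
  have hc : ∀ k, 0 ≤ (a k : ℝ) := fun k => Nat.cast_nonneg _
  have hsaddle : ∀ n, 0 < n → ENNReal.ofReal n < nmax → IsSaddlePoint (a ·) n (z0 n) := by
    intro n hn hnmax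
    obtain ⟨hz, hzR, hderiv, -⟩ := hz0 n hn hnmax
    obtain ⟨s, hzs, hs⟩ := exists_lt_summable_of_ofReal_lt hconv hz.le hzR
    exact isSaddlePoint_of_mul_deriv_eq hc hz hzs hs hderiv
  constructor
  · obtain ⟨k₀, hk₀, hak₀⟩ := hk
    obtain ⟨ρ, -, hρ, hρR⟩ := ENNReal.lt_iff_exists_real_btwn.1 hR
    replace hρ := ENNReal.ofReal_pos.1 hρ
    obtain ⟨s, hρs, hs⟩ := exists_lt_summable_of_ofReal_lt hconv hρ.le hρR
    have hnear : ∀ᶠ n in 𝓝[>] (0 : ℝ), ENNReal.ofReal n < nmax :=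
      ((ENNReal.continuous_ofReal.tendsto' 0 0 ENNReal.ofReal_zero).mono_left
        nhdsWithin_le_nhds).eventually_lt_const hnmax
    exact tendsto_log_tsum_sub_mul_log_nhdsGT_zero_of_isSaddlePoint hc (Nat.cast_pos.2 ha0) hk₀
      (Nat.cast_pos.2 hak₀) hρ (summable_natCast_mul_mul_pow_of_lt hc hρ.le hρs hs)
      ((hnear.and self_mem_nhdsWithin).mono fun n hn => hsaddle n hn.2 hn.1)
  · rintro m hm ham htop rfl
    refine tendsto_log_tsum_sub_mul_log_nhdsLT_of_isSaddlePoint hc (Nat.cast_pos.2 ha0) hm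
      (Nat.cast_pos.2 ham) (fun k hk => by simp [htop k hk]) ?_
    filter_upwards [Ioo_mem_nhdsLT (Nat.cast_pos.2 hm)] with n hn
    exact hsaddle n hn.1 ((ENNReal.ofReal_lt_natCast (by omega)).2 hn.2)

/-- With β(n) = ln ζ(z₀(n)) − n ln z₀(n) and a₀ > 0, one has
lim_{n→0⁺} β(n) = ln a₀; if additionally ζ is a polynomial of degree n_max
(with a_{n_max} > 0), then lim_{n→n_max⁻} β(n) = ln a_{n_max}. -/
theorem typical_ee_beta_boundary (a : ℕ → ℕ) (ha0 : 0 < a 0)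
    (hk : ∃ k, 0 < k ∧ 0 < a k)
    (R : ENNReal) (hR : 0 < R)
    (hconv : ∀ x : ℝ, 0 ≤ x → ENNReal.ofReal x < R →
      Summable (fun k : ℕ => (a k : ℝ) * x ^ k))
    (hdiv : ∀ x : ℝ, 0 ≤ x → R < ENNReal.ofReal x →
      ¬ Summable (fun k : ℕ => (a k : ℝ) * x ^ k))
    (nmax : ENNReal) (hnmax : 0 < nmax)
    (z0 : ℝ → ℝ)
    (hz0 : ∀ n : ℝ, 0 < n → ENNReal.ofReal n < nmax →
      0 < z0 n ∧ ENNReal.ofReal (z0 n) < R ∧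
        z0 n * deriv (tsumZeta a) (z0 n) = n * tsumZeta a (z0 n) ∧
        (∀ w : ℝ, 0 < w → ENNReal.ofReal w < R →
          w * deriv (tsumZeta a) w = n * tsumZeta a w → w = z0 n)) :
    Tendsto (fun n : ℝ => Real.log (tsumZeta a (z0 n)) - n * Real.log (z0 n))
      (𝓝[>] (0 : ℝ)) (𝓝 (Real.log (a 0))) ∧
    (∀ m : ℕ, 1 ≤ m → 0 < a m → (∀ k : ℕ, m < k → a k = 0) → nmax = (m : ENNReal) →
      Tendsto (fun n : ℝ => Real.log (tsumZeta a (z0 n)) - n * Real.log (z0 n))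
        (𝓝[<] (m : ℝ)) (𝓝 (Real.log (a m)))) :=
  typical_ee_beta_boundary_general a ha0 hk R hR hconv nmax hnmax z0 hz0
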